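/- arXiv:1911.11510 — 7 statements merged into one kernel-verified Lean document; each statement's English description precedes it below -/
import Mathlib

section
/- For every real number θ > 0 and every real number x with 0 < x ≤ 1, one has log(e + θ/x) ≤ log(e + θ)·(1 + log(1/x)). -/
open Real

theorem log_aux_inequality (θ x : ℝ) (hθ : 0 < θ) (hx : 0 < x) (hx1 : x ≤ 1) :
    Real.log (Real.exp 1 + θ / x) ≤ Real.log (Real.exp 1 + θ) * (1 + Real.log (1 / x)) := by
  have he : (0:ℝ) < Real.exp 1 := Real.exp_pos 1
  have h1 : Real.exp 1 + θ / x ≤ (Real.exp 1 + θ) / x := by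
    rw [add_div]
    have : Real.exp 1 ≤ Real.exp 1 / x := by
      rw [le_div_iff₀ hx]
      nlinarith
    linarith
  have h2 : Real.log (Real.exp 1 + θ / x) ≤ Real.log (Real.exp 1 + θ) + Real.log (1 / x) := by
    have := Real.log_le_log (by positivity) h1
    rw [Real.log_div (by positivity) (ne_of_gt hx)] at this
    rw [Real.log_div one_ne_zero (ne_of_gt hx), Real.log_one]
    linarith
  have h3 : (1:ℝ) ≤ Real.log (Real.exp 1 + θ) := by
    calc (1:ℝ) = Real.log (Real.exp 1) := (Real.log_exp 1).symm
    _ ≤ _ := Real.log_le_log he (by linarith)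
  have h4 : 0 ≤ Real.log (1 / x) := by
    apply Real.log_nonneg
    rw [le_div_iff₀ hx]; linarith
  nlinarith
end

section
/- (Osgood lemma, positive constant case.) Let t₀ < T be real numbers, a > 0, ρ : [t₀,T] → [0,a] a measurable function, γ : [t₀,T] → [0,∞) an integrable function, and μ : [0,a] → [0,∞) a continuous nondecreasing function with μ(r) > 0 for every r ∈ (0,a]. Assume that for some constant c with 0 < c ≤ a one has ρ(t) ≤ c + ∫_{t₀}^t γ(s) μ(ρ(s)) ds for almost every t ∈ [t₀,T]. Define N(x) = ∫_x^a dτ/μ(τ) for x ∈ (0,a]. Then for almost every t ∈ [t₀,T] with ρ(t) > 0 one has N(c) − N(ρ(t)) ≤ ∫_{t₀}^t γ(s) ds. -/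
open MeasureTheory Set intervalIntegral Filter Topology

/-- Derivative-free Osgood/Gronwall core lemma, with a globally defined modulus `ν`. -/
theorem osgood_aux (t₀ T a c : ℝ) (htT : t₀ ≤ T) (hc : 0 < c) (hca : c ≤ a)
    (ρ γ ν : ℝ → ℝ)
    (hν_cont : Continuous ν) (hν_mono : Monotone ν)
    (hν_nonneg : ∀ x, 0 ≤ ν x) (hν_pos : ∀ x, 0 < x → 0 < ν x)
    (hγ_nonneg : ∀ t ∈ Icc t₀ T, 0 ≤ γ t)
    (hγ_int : IntegrableOn γ (Icc t₀ T))
    (hg_int : IntegrableOn (fun s => γ s * ν (ρ s)) (Icc t₀ T))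
    (hineq : ∀ᵐ t ∂(volume.restrict (Icc t₀ T)),
      ρ t ≤ min (c + ∫ s in t₀..t, γ s * ν (ρ s)) a) :
    ∀ᵐ t ∂(volume.restrict (Icc t₀ T)), 0 < ρ t →
      (∫ τ in c..(ρ t), 1 / ν τ) ≤ ∫ s in t₀..t, γ s := by
  set g : ℝ → ℝ := fun s => γ s * ν (ρ s) with hg_def
  set F : ℝ → ℝ := fun t => c + ∫ s in t₀..t, g s with hF_def
  set G : ℝ → ℝ := fun t => min (F t) a with hG_def
  set Γ : ℝ → ℝ := fun t => ∫ s in t₀..t, γ s with hΓ_def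
  set w : ℝ → ℝ := fun τ => 1 / ν τ with hw_def
  set Φ : ℝ → ℝ := fun x => ∫ τ in c..x, w τ with hΦ_def
  have hg_ii : ∀ u v, u ∈ Icc t₀ T → v ∈ Icc t₀ T → IntervalIntegrable g volume u v :=
    fun u v hu hv => (hg_int.mono_set (uIcc_subset_Icc hu hv)).intervalIntegrable
  have hγ_ii : ∀ u v, u ∈ Icc t₀ T → v ∈ Icc t₀ T → IntervalIntegrable γ volume u v :=
    fun u v hu hv => (hγ_int.mono_set (uIcc_subset_Icc hu hv)).intervalIntegrable
  have ht₀ : t₀ ∈ Icc t₀ T := ⟨le_rfl, htT⟩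
  have hF_sub : ∀ u v, u ∈ Icc t₀ T → v ∈ Icc t₀ T → F v - F u = ∫ s in u..v, g s := by
    intro u v hu hv
    have : F v - F u = (∫ s in t₀..v, g s) - ∫ s in t₀..u, g s := by simp [hF_def]
    rw [this, integral_interval_sub_left (hg_ii t₀ v ht₀ hv) (hg_ii t₀ u ht₀ hu)]
  have hΓ_sub : ∀ u v, u ∈ Icc t₀ T → v ∈ Icc t₀ T → Γ v - Γ u = ∫ s in u..v, γ s := by
    intro u v hu hv
    rw [hΓ_def, integral_interval_sub_left (hγ_ii t₀ v ht₀ hv) (hγ_ii t₀ u ht₀ hu)]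
  have hg_nonneg : ∀ u v, u ∈ Icc t₀ T → v ∈ Icc t₀ T → u ≤ v → (0:ℝ) ≤ ∫ s in u..v, g s := by
    intro u v hu hv huv
    exact intervalIntegral.integral_nonneg huv fun s hs =>
      mul_nonneg (hγ_nonneg s ⟨hu.1.trans hs.1, hs.2.trans hv.2⟩) (hν_nonneg _)
  have hγint_nonneg : ∀ u v, u ∈ Icc t₀ T → v ∈ Icc t₀ T → u ≤ v → (0:ℝ) ≤ ∫ s in u..v, γ s := by
    intro u v hu hv huv
    exact intervalIntegral.integral_nonneg huv fun s hs => hγ_nonneg s ⟨hu.1.trans hs.1, hs.2.trans hv.2⟩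
  have hF_mono : ∀ u v, u ∈ Icc t₀ T → v ∈ Icc t₀ T → u ≤ v → F u ≤ F v := by
    intro u v hu hv huv
    have := hg_nonneg u v hu hv huv
    have h2 := hF_sub u v hu hv
    linarith
  have hcF : ∀ t, t ∈ Icc t₀ T → c ≤ F t := by
    intro t ht
    have := hF_mono t₀ t ht₀ ht ht.1
    have h0 : F t₀ = c := by simp [hF_def]
    linarith
  have hcG : ∀ t, t ∈ Icc t₀ T → c ≤ G t := fun t ht => le_min (hcF t ht) hca
  have hG_mono : ∀ u v, u ∈ Icc t₀ T → v ∈ Icc t₀ T → u ≤ v → G u ≤ G v :=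
    fun u v hu hv huv => min_le_min (hF_mono u v hu hv huv) le_rfl
  have hF_cont : ContinuousOn F (Icc t₀ T) := by
    have h := continuousOn_primitive_interval' (hg_ii t₀ T ht₀ ⟨htT, le_rfl⟩) left_mem_uIcc
    rw [uIcc_of_le htT] at h
    exact continuousOn_const.add h
  have hΓ_cont : ContinuousOn Γ (Icc t₀ T) := by
    have h := continuousOn_primitive_interval' (hγ_ii t₀ T ht₀ ⟨htT, le_rfl⟩) left_mem_uIcc
    rw [uIcc_of_le htT] at h
    exact h
  have hG_cont : ContinuousOn G (Icc t₀ T) := hF_cont.inf continuousOn_const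
  have hw_nonneg : ∀ τ, 0 ≤ w τ := fun τ => one_div_nonneg.2 (hν_nonneg τ)
  have hw_meas : Measurable w := measurable_const.div hν_cont.measurable
  have hw_cont : ContinuousOn w (Ioi 0) :=
    continuousOn_const.div hν_cont.continuousOn (fun x hx => (hν_pos x hx).ne')
  have hw_ii : ∀ x y, 0 < x → 0 < y → IntervalIntegrable w volume x y := by
    intro x y hx hy
    apply (hw_cont.mono ?_).intervalIntegrable
    intro τ hτ
    exact (lt_min hx hy).trans_le hτ.1
  have hΦ_add : ∀ x y, 0 < x → 0 < y → Φ y - Φ x = ∫ τ in x..y, w τ := by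
    intro x y hx hy
    rw [hΦ_def]
    exact integral_interval_sub_left (hw_ii c y hc hy) (hw_ii c x hc hx)
  have hΦ_mono : ∀ x y, 0 < x → x ≤ y → Φ x ≤ Φ y := by
    intro x y hx hxy
    have h := hΦ_add x y hx (hx.trans_le hxy)
    have h2 : (0:ℝ) ≤ ∫ τ in x..y, w τ :=
      intervalIntegral.integral_nonneg hxy fun τ _ => hw_nonneg τ
    linarith
  have hΦ_le : ∀ x y, 0 < x → x ≤ y → Φ y ≤ Φ x + (y - x) * (1 / ν x) := by
    intro x y hx hxy
    have h := hΦ_add x y hx (hx.trans_le hxy)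
    have hb : (∫ τ in x..y, w τ) ≤ ∫ τ in x..y, (1 / ν x) := by
      apply intervalIntegral.integral_mono_on hxy (hw_ii x y hx (hx.trans_le hxy))
        intervalIntegrable_const
      intro τ hτ
      exact one_div_le_one_div_of_le (hν_pos x hx) (hν_mono hτ.1)
    rw [intervalIntegral.integral_const, smul_eq_mul] at hb
    linarith
  have hΦ_contAt : ∀ x, 0 < x → ContinuousAt Φ x := by
    intro x hx
    exact (integral_hasDerivAt_right (hw_ii c x hc hx)
      (hw_meas.stronglyMeasurable.stronglyMeasurableAtFilter)
      (hw_cont.continuousAt (Ioi_mem_nhds hx))).continuousAt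
  have hρ_le_G : ∀ᵐ t ∂(volume.restrict (Icc t₀ T)), ρ t ≤ G t := hineq
  -- main continuous induction
  have hmain : ∀ ε, 0 < ε → ∀ t ∈ Icc t₀ T, Φ (G t) ≤ (1 + ε) * Γ t := by
    intro ε hε
    set S : Set ℝ := {t : ℝ | Φ (G t) ≤ (1 + ε) * Γ t} with hS_def
    have hΦG_cont : ContinuousOn (fun t => Φ (G t)) (Icc t₀ T) := fun t ht =>
      (hΦ_contAt (G t) (hc.trans_le (hcG t ht))).comp_continuousWithinAt (hG_cont t ht)
    have hclosed : IsClosed (S ∩ Icc t₀ T) := by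
      have hcont : ContinuousOn (fun t => (1 + ε) * Γ t - Φ (G t)) (Icc t₀ T) :=
        (continuousOn_const.mul hΓ_cont).sub hΦG_cont
      have hEq : S ∩ Icc t₀ T
          = Icc t₀ T ∩ (fun t => (1 + ε) * Γ t - Φ (G t)) ⁻¹' (Ici 0) := by
        ext t
        simp only [hS_def, mem_inter_iff, mem_setOf_eq, mem_preimage, mem_Ici, sub_nonneg]
        tauto
      rw [hEq]
      exact hcont.preimage_isClosed_of_isClosed isClosed_Icc isClosed_Ici
    have ht₀S : t₀ ∈ S := by
      have hG0 : G t₀ = c := by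
        have hF0 : F t₀ = c := by simp [hF_def]
        rw [hG_def]; simp only; rw [hF0, min_eq_left hca]
      have hΓ0 : Γ t₀ = 0 := by simp [hΓ_def]
      have hΦc : Φ c = 0 := by simp [hΦ_def]
      simp only [hS_def, mem_setOf_eq, hG0, hΓ0, hΦc, mul_zero, le_refl]
    intro t ht
    refine hclosed.Icc_subset_of_forall_mem_nhdsWithin ht₀S ?_ ht
    rintro x ⟨hxS, hxI⟩
    have hxIcc : x ∈ Icc t₀ T := ⟨hxI.1, hxI.2.le⟩
    have hGx_pos : 0 < G x := hc.trans_le (hcG x hxIcc)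
    have hKpos : 0 < ν (G x) := hν_pos _ hGx_pos
    have hev1 : Ioc x T ∈ 𝓝[>] x := Ioc_mem_nhdsGT hxI.2
    have hIccmem : Icc t₀ T ∈ 𝓝[>] x :=
      mem_of_superset hev1 (fun s hs => ⟨hxI.1.trans hs.1.le, hs.2⟩)
    have hcw : ContinuousWithinAt (fun t => ν (G t)) (Icc t₀ T) x :=
      hν_cont.continuousAt.comp_continuousWithinAt (hG_cont x hxIcc)
    have hev2 : ∀ᶠ t in 𝓝[>] x, ν (G t) < (1 + ε) * ν (G x) := by
      apply (hcw.mono_left (nhdsWithin_le_of_mem hIccmem)).eventually_lt_const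
      nlinarith
    filter_upwards [hev1, hev2] with t ht' hνt
    have htIcc : t ∈ Icc t₀ T := ⟨hxI.1.trans ht'.1.le, ht'.2⟩
    have hxt : x ≤ t := ht'.1.le
    have hGxt : G x ≤ G t := hG_mono x t hxIcc htIcc hxt
    have h1 : Φ (G t) ≤ Φ (G x) + (G t - G x) * (1 / ν (G x)) := hΦ_le _ _ hGx_pos hGxt
    have hFxt : F x ≤ F t := hF_mono x t hxIcc htIcc hxt
    have h2 : G t - G x ≤ F t - F x := by
      rw [hG_def]
      rcases le_total (F x) a with h | h
      · simp only
        rw [min_eq_left h]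
        have := min_le_left (F t) a
        linarith
      · simp only
        rw [min_eq_right h, min_eq_right (h.trans hFxt)]
        linarith
    have h3 : F t - F x = ∫ s in x..t, g s := hF_sub x t hxIcc htIcc
    have h4 : (∫ s in x..t, g s) ≤ ν (G t) * ∫ s in x..t, γ s := by
      have hsub : Icc x t ⊆ Icc t₀ T := Icc_subset_Icc hxI.1 ht'.2
      have hae : ∀ᵐ s ∂(volume.restrict (Icc x t)), g s ≤ ν (G t) * γ s := by
        filter_upwards [ae_restrict_of_ae_restrict_of_subset hsub hρ_le_G,
          ae_restrict_mem measurableSet_Icc] with s hs hsmem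
        have hsIcc : s ∈ Icc t₀ T := hsub hsmem
        have hνs : ν (ρ s) ≤ ν (G t) :=
          hν_mono (hs.trans (hG_mono s t hsIcc htIcc hsmem.2))
        calc g s = γ s * ν (ρ s) := rfl
          _ ≤ γ s * ν (G t) := mul_le_mul_of_nonneg_left hνs (hγ_nonneg s hsIcc)
          _ = ν (G t) * γ s := mul_comm _ _
      have hmono := intervalIntegral.integral_mono_ae_restrict hxt
        (hg_ii x t hxIcc htIcc) ((hγ_ii x t hxIcc htIcc).const_mul (ν (G t))) hae
      rwa [intervalIntegral.integral_const_mul] at hmono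
    have h5 : (∫ s in x..t, γ s) = Γ t - Γ x := (hΓ_sub x t hxIcc htIcc).symm
    have h6 : (0:ℝ) ≤ ∫ s in x..t, γ s := hγint_nonneg x t hxIcc htIcc hxt
    have h7 : ν (G t) * (∫ s in x..t, γ s) ≤ (1 + ε) * ν (G x) * (Γ t - Γ x) := by
      rw [← h5]
      exact mul_le_mul_of_nonneg_right hνt.le h6
    have hchain : G t - G x ≤ (1 + ε) * ν (G x) * (Γ t - Γ x) := by linarith
    have hxS' : Φ (G x) ≤ (1 + ε) * Γ x := hxS
    show Φ (G t) ≤ (1 + ε) * Γ t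
    have h8 : (G t - G x) * (1 / ν (G x)) ≤ (1 + ε) * (Γ t - Γ x) := by
      have := mul_le_mul_of_nonneg_right hchain (one_div_nonneg.2 hKpos.le)
      calc (G t - G x) * (1 / ν (G x)) ≤ (1 + ε) * ν (G x) * (Γ t - Γ x) * (1 / ν (G x)) := this
        _ = (1 + ε) * (Γ t - Γ x) := by field_simp
    linarith
  -- pass to the limit ε → 0
  have hall : ∀ t ∈ Icc t₀ T, Φ (G t) ≤ Γ t := by
    intro t ht
    by_contra hlt
    push_neg at hlt
    have hΓ0 : 0 ≤ Γ t := hγint_nonneg t₀ t ht₀ ht ht.1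
    set ε : ℝ := (Φ (G t) - Γ t) / (Γ t + 1) with hε_def
    have hεpos : 0 < ε := div_pos (by linarith) (by linarith)
    have h := hmain ε hεpos t ht
    have hmul : ε * (Γ t + 1) = Φ (G t) - Γ t := by
      rw [hε_def]; field_simp
    nlinarith
  -- conclude
  filter_upwards [hρ_le_G, ae_restrict_mem measurableSet_Icc] with t hρG ht hρpos
  have h1 : Φ (ρ t) ≤ Φ (G t) := hΦ_mono _ _ hρpos hρG
  have h2 := hall t ht
  calc (∫ τ in c..(ρ t), 1 / ν τ) = Φ (ρ t) := rfl
    _ ≤ Γ t := le_trans h1 h2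
    _ = ∫ s in t₀..t, γ s := rfl
theorem osgood_lemma_positive_constant
    (t₀ T a c : ℝ) (htT : t₀ < T) (ha : 0 < a)
    (ρ γ μ : ℝ → ℝ)
    (hρ_meas : Measurable ρ)
    (hρ_mem : ∀ t ∈ Set.Icc t₀ T, ρ t ∈ Set.Icc 0 a)
    (hγ_nonneg : ∀ t ∈ Set.Icc t₀ T, 0 ≤ γ t)
    (hγ_int : MeasureTheory.IntegrableOn γ (Set.Icc t₀ T))
    (hμ_cont : ContinuousOn μ (Set.Icc 0 a))
    (hμ_mono : MonotoneOn μ (Set.Icc 0 a))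
    (hμ_nonneg : ∀ r ∈ Set.Icc 0 a, 0 ≤ μ r)
    (hμ_pos : ∀ r ∈ Set.Ioc 0 a, 0 < μ r)
    (hc : 0 < c) (hca : c ≤ a)
    (hineq : ∀ᵐ t ∂(volume.restrict (Set.Icc t₀ T)),
      ρ t ≤ c + ∫ s in t₀..t, γ s * μ (ρ s)) :
    ∀ᵐ t ∂(volume.restrict (Set.Icc t₀ T)),
      0 < ρ t →
        (∫ τ in c..a, 1 / μ τ) - (∫ τ in (ρ t)..a, 1 / μ τ) ≤ ∫ s in t₀..t, γ s := by
  have ha' : (0:ℝ) ≤ a := ha.le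
  set cl : ℝ → ℝ := fun x => min (max x 0) a with hcl_def
  have hcl_mem : ∀ x, cl x ∈ Icc 0 a := fun x =>
    ⟨le_min (le_max_right _ _) ha', min_le_right _ _⟩
  have hcl_id : ∀ x ∈ Icc 0 a, cl x = x := fun x hx => by
    simp [hcl_def, max_eq_left hx.1, min_eq_left hx.2]
  set ν : ℝ → ℝ := fun x => μ (cl x) with hν_def
  have hν_eq : ∀ x ∈ Icc 0 a, ν x = μ x := fun x hx => by
    simp only [hν_def]; rw [hcl_id x hx]
  have hcl_cont : Continuous cl := by fun_prop
  have hν_cont : Continuous ν := hμ_cont.comp_continuous hcl_cont hcl_mem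
  have hν_mono : Monotone ν := fun x y h =>
    hμ_mono (hcl_mem x) (hcl_mem y) (min_le_min (max_le_max h le_rfl) le_rfl)
  have hν_nonneg : ∀ x, 0 ≤ ν x := fun x => hμ_nonneg _ (hcl_mem x)
  have hν_pos : ∀ x, 0 < x → 0 < ν x := by
    intro x hx
    exact hμ_pos _ ⟨lt_min (hx.trans_le (le_max_left _ _)) ha, min_le_right _ _⟩
  have hν_le : ∀ x, ν x ≤ μ a := fun x => hμ_mono (hcl_mem x) ⟨ha', le_rfl⟩ (min_le_right _ _)
  have hg_meas : Measurable fun s => ν (ρ s) := hν_cont.measurable.comp hρ_meas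
  have hg_int : IntegrableOn (fun s => γ s * ν (ρ s)) (Icc t₀ T) := by
    have h := hγ_int.bdd_mul (c := μ a) hg_meas.aestronglyMeasurable (Filter.Eventually.of_forall fun x => by
      rw [Real.norm_eq_abs, abs_of_nonneg (hν_nonneg _)]; exact hν_le _)
    exact h.congr (Filter.Eventually.of_forall fun x => mul_comm _ _)
  have hineq' : ∀ᵐ t ∂(volume.restrict (Icc t₀ T)),
      ρ t ≤ min (c + ∫ s in t₀..t, γ s * ν (ρ s)) a := by
    filter_upwards [hineq, ae_restrict_mem measurableSet_Icc] with t h1 ht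
    have hcongr : (∫ s in t₀..t, γ s * μ (ρ s)) = ∫ s in t₀..t, γ s * ν (ρ s) := by
      apply intervalIntegral.integral_congr
      intro s hs
      have hs' : s ∈ Icc t₀ T := uIcc_subset_Icc ⟨le_rfl, htT.le⟩ ht hs
      show γ s * μ (ρ s) = γ s * ν (ρ s)
      rw [hν_eq _ (hρ_mem s hs')]
    exact le_min (by rw [← hcongr]; exact h1) (hρ_mem t ht).2
  have haux := osgood_aux t₀ T a c htT.le hc hca ρ γ ν hν_cont hν_mono hν_nonneg hν_pos
    hγ_nonneg hγ_int hg_int hineq'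
  have hw_ii : ∀ x y : ℝ, 0 < x → 0 < y →
      IntervalIntegrable (fun τ => 1 / ν τ) volume x y := by
    intro x y hx hy
    apply ((continuousOn_const.div hν_cont.continuousOn
      (fun τ (hτ : τ ∈ Ioi (0:ℝ)) => (hν_pos τ hτ).ne')).mono ?_).intervalIntegrable
    intro τ hτ
    exact (lt_min hx hy).trans_le hτ.1
  filter_upwards [haux, ae_restrict_mem measurableSet_Icc] with t h1 ht hρpos
  have hρt := hρ_mem t ht
  have e1 : (∫ τ in c..a, 1 / μ τ) = ∫ τ in c..a, 1 / ν τ :=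
    intervalIntegral.integral_congr fun τ hτ => by
      show 1 / μ τ = 1 / ν τ
      rw [hν_eq τ (uIcc_subset_Icc ⟨hc.le, hca⟩ ⟨ha', le_rfl⟩ hτ)]
  have e2 : (∫ τ in (ρ t)..a, 1 / μ τ) = ∫ τ in (ρ t)..a, 1 / ν τ :=
    intervalIntegral.integral_congr fun τ hτ => by
      show 1 / μ τ = 1 / ν τ
      rw [hν_eq τ (uIcc_subset_Icc ⟨hρpos.le, hρt.2⟩ ⟨ha', le_rfl⟩ hτ)]
  have e3 : (∫ τ in c..(ρ t), 1 / ν τ) + (∫ τ in (ρ t)..a, 1 / ν τ) = ∫ τ in c..a, 1 / ν τ :=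
    intervalIntegral.integral_add_adjacent_intervals (hw_ii c (ρ t) hc hρpos)
      (hw_ii (ρ t) a hρpos ha)
  rw [e1, e2]
  linarith [h1 hρpos]
end

section
/- (Osgood lemma, zero constant case.) Let t₀ < T be real numbers, a > 0, ρ : [t₀,T] → [0,a] a measurable function, γ : [t₀,T] → [0,∞) an integrable function, and μ : [0,a] → [0,∞) a continuous nondecreasing function with μ(r) > 0 for every r ∈ (0,a]. Assume ρ(t) ≤ ∫_{t₀}^t γ(s) μ(ρ(s)) ds for almost every t ∈ [t₀,T], and assume ∫_0^a dτ/μ(τ) = +∞ (i.e. the integrals ∫_ε^a dτ/μ(τ) tend to +∞ as ε → 0⁺). Then ρ(t) = 0 for almost every t ∈ [t₀,T]. -/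
open MeasureTheory Set Filter

theorem osgood_lemma_zero_constant
    (t₀ T a : ℝ) (htT : t₀ < T) (ha : 0 < a)
    (ρ γ μ : ℝ → ℝ)
    (hρ_meas : Measurable ρ)
    (hρ_mem : ∀ t ∈ Set.Icc t₀ T, ρ t ∈ Set.Icc 0 a)
    (hγ_nonneg : ∀ t ∈ Set.Icc t₀ T, 0 ≤ γ t)
    (hγ_int : MeasureTheory.IntegrableOn γ (Set.Icc t₀ T))
    (hμ_cont : ContinuousOn μ (Set.Icc 0 a))
    (hμ_mono : MonotoneOn μ (Set.Icc 0 a))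
    (hμ_nonneg : ∀ r ∈ Set.Icc 0 a, 0 ≤ μ r)
    (hμ_pos : ∀ r ∈ Set.Ioc 0 a, 0 < μ r)
    (hineq : ∀ᵐ t ∂(volume.restrict (Set.Icc t₀ T)),
      ρ t ≤ ∫ s in t₀..t, γ s * μ (ρ s))
    (hdiv : Filter.Tendsto (fun ε => ∫ τ in ε..a, 1 / μ τ)
      (nhdsWithin 0 (Set.Ioi 0)) Filter.atTop) :
    ∀ᵐ t ∂(volume.restrict (Set.Icc t₀ T)), ρ t = 0 := by
  -- clamped version of μ, continuous and monotone on all of ℝ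
  set ν : ℝ → ℝ := fun x => μ (max 0 (min x a)) with hν_def
  have hproj_mem : ∀ x : ℝ, max 0 (min x a) ∈ Icc 0 a := fun x =>
    ⟨le_max_left _ _, max_le ha.le (min_le_right _ _)⟩
  have hproj_id : ∀ x ∈ Icc 0 a, max 0 (min x a) = x := by
    intro x hx
    rw [min_eq_left hx.2, max_eq_right hx.1]
  have hν_eq : ∀ x ∈ Icc 0 a, ν x = μ x := fun x hx => by
    simp only [hν_def, hproj_id x hx]
  have hν_cont : Continuous ν :=
    hμ_cont.comp_continuous (continuous_const.max (continuous_id.min continuous_const))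
      hproj_mem
  have hν_mono : Monotone ν := by
    intro x y hxy
    exact hμ_mono (hproj_mem x) (hproj_mem y)
      (max_le_max le_rfl (min_le_min hxy le_rfl))
  have hν_nonneg : ∀ x, 0 ≤ ν x := fun x => hμ_nonneg _ (hproj_mem x)
  set f : ℝ → ℝ := fun s => γ s * ν (ρ s) with hf_def
  have hf_int : IntegrableOn f (Icc t₀ T) := by
    have hbm : Integrable (fun s => ν (ρ s) * γ s) (volume.restrict (Icc t₀ T)) := by
      apply hγ_int.bdd_mul (c := μ a) ((hν_cont.measurable.comp hρ_meas).aestronglyMeasurable)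
      refine ae_of_all _ fun x => ?_
      simp only [Function.comp_apply, Real.norm_eq_abs, hν_def]
      rw [abs_of_nonneg (hμ_nonneg _ (hproj_mem _))]
      exact hμ_mono (hproj_mem _) (right_mem_Icc.2 ha.le) (max_le ha.le (min_le_right _ _))
    exact hbm.congr (ae_of_all _ fun s => mul_comm _ _)
  have hf_nonneg : ∀ s ∈ Icc t₀ T, 0 ≤ f s := fun s hs =>
    mul_nonneg (hγ_nonneg s hs) (hν_nonneg _)
  have hf_ii : ∀ u v, u ∈ Icc t₀ T → v ∈ Icc t₀ T → IntervalIntegrable f volume u v :=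
    fun u v hu hv => (hf_int.mono_set (uIcc_subset_Icc hu hv)).intervalIntegrable
  have hγ_ii : ∀ u v, u ∈ Icc t₀ T → v ∈ Icc t₀ T → IntervalIntegrable γ volume u v :=
    fun u v hu hv => (hγ_int.mono_set (uIcc_subset_Icc hu hv)).intervalIntegrable
  set R : ℝ → ℝ := fun t => ∫ s in t₀..t, f s with hR_def
  have hR0 : R t₀ = 0 := intervalIntegral.integral_same
  have hR_cont : ContinuousOn R (Icc t₀ T) := by
    apply (intervalIntegral.continuousOn_primitive hf_int).congr
    intro x hx
    simp only [hR_def]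
    rw [intervalIntegral.integral_of_le hx.1]
  have hR_add : ∀ u v, u ∈ Icc t₀ T → v ∈ Icc t₀ T →
      R v = R u + ∫ s in u..v, f s := by
    intro u v hu hv
    simp only [hR_def]
    exact (intervalIntegral.integral_add_adjacent_intervals
      (hf_ii t₀ u (left_mem_Icc.2 htT.le) hu) (hf_ii u v hu hv)).symm
  have hR_mono : ∀ u v, u ∈ Icc t₀ T → v ∈ Icc t₀ T → u ≤ v → R u ≤ R v := by
    intro u v hu hv huv
    rw [hR_add u v hu hv]
    have : 0 ≤ ∫ s in u..v, f s :=
      intervalIntegral.integral_nonneg huv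
        (fun x hx => hf_nonneg x ⟨hu.1.trans hx.1, hx.2.trans hv.2⟩)
    linarith
  have hR_nonneg : ∀ t ∈ Icc t₀ T, 0 ≤ R t := by
    intro t ht
    rw [← hR0]
    exact hR_mono t₀ t (left_mem_Icc.2 htT.le) ht ht.1
  -- a.e. bound ρ ≤ R
  have hρR : ∀ᵐ t ∂(volume.restrict (Icc t₀ T)), ρ t ≤ R t := by
    filter_upwards [hineq, ae_restrict_mem measurableSet_Icc] with t h1 h2
    have : (∫ s in t₀..t, γ s * μ (ρ s)) = R t := by
      rw [hR_def]
      apply intervalIntegral.integral_congr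
      intro s hs
      rw [uIcc_of_le h2.1] at hs
      simp only [hf_def]
      rw [hν_eq (ρ s) (hρ_mem s ⟨hs.1, hs.2.trans h2.2⟩)]
    rwa [this] at h1
  have hfγR : ∀ᵐ s ∂(volume.restrict (Icc t₀ T)), f s ≤ γ s * ν (R s) := by
    filter_upwards [hρR, ae_restrict_mem measurableSet_Icc] with s h1 h2
    exact mul_le_mul_of_nonneg_left (hν_mono h1) (hγ_nonneg s h2)
  -- Main claim : R T = 0
  have hRT : R T = 0 := by
    by_contra hne
    have hRT_pos : 0 < R T :=
      lt_of_le_of_ne (hR_nonneg T (right_mem_Icc.2 htT.le)) (Ne.symm hne)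
    set c : ℝ := min a (R T) with hc_def
    have hc_pos : 0 < c := lt_min ha hRT_pos
    have hca : c ≤ a := min_le_left _ _
    set cs : ℕ → ℝ := fun k => c / 2 ^ k with hcs_def
    have hcs_pos : ∀ k, 0 < cs k := fun k => by positivity
    have hcs_le_c : ∀ k, cs k ≤ c := fun k => by
      simp only [hcs_def]
      exact div_le_self hc_pos.le (one_le_pow₀ one_le_two)
    have hcs_anti : ∀ k l, k ≤ l → cs l ≤ cs k := by
      intro k l hkl
      simp only [hcs_def]
      rw [div_le_div_iff₀ (by positivity) (by positivity)]
      have h2 : (2:ℝ) ^ k ≤ 2 ^ l := by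
        first
          | exact pow_le_pow_right one_le_two hkl
          | exact pow_le_pow_right₀ one_le_two hkl
      exact mul_le_mul_of_nonneg_left h2 hc_pos.le
    have hcs_succ : ∀ k, cs k - cs (k + 1) = cs (k + 1) := by
      intro k
      simp only [hcs_def, pow_succ]
      field_simp
      ring
    -- first hitting times
    set S : ℕ → Set ℝ := fun k => Icc t₀ T ∩ R ⁻¹' Ici (cs k) with hS_def
    have hS_ne : ∀ k, (S k).Nonempty := fun k =>
      ⟨T, right_mem_Icc.2 htT.le, (hcs_le_c k).trans (min_le_right _ _)⟩
    have hS_bdd : ∀ k, BddBelow (S k) := fun k => ⟨t₀, fun x hx => hx.1.1⟩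
    have hS_closed : ∀ k, IsClosed (S k) := fun k =>
      hR_cont.preimage_isClosed_of_isClosed isClosed_Icc isClosed_Ici
    set τ : ℕ → ℝ := fun k => sInf (S k) with hτ_def
    have hτ_mem : ∀ k, τ k ∈ S k := fun k =>
      (hS_closed k).csInf_mem (hS_ne k) (hS_bdd k)
    have hτ_Icc : ∀ k, τ k ∈ Icc t₀ T := fun k => (hτ_mem k).1
    have hτ_anti : ∀ k l, k ≤ l → τ l ≤ τ k := by
      intro k l hkl
      apply csInf_le_csInf (hS_bdd l) (hS_ne k)
      intro x hx
      exact ⟨hx.1, (hcs_anti k l hkl).trans hx.2⟩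
    have hRτ : ∀ k, R (τ k) = cs k := by
      intro k
      refine le_antisymm ?_ (hτ_mem k).2
      rcases eq_or_lt_of_le (hτ_Icc k).1 with heq | hlt
      · rw [← heq, hR0]; exact (hcs_pos k).le
      · have hsub : Ico t₀ (τ k) ⊆ Icc t₀ T :=
          fun x hx => ⟨hx.1, (hx.2.le).trans (hτ_Icc k).2⟩
        have hlim : Filter.Tendsto R (nhdsWithin (τ k) (Ico t₀ (τ k))) (nhds (R (τ k))) :=
          ((hR_cont (τ k) (hτ_Icc k)).mono hsub).tendsto
        have hne' : (nhdsWithin (τ k) (Ico t₀ (τ k))).NeBot := by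
          apply mem_closure_iff_nhdsWithin_neBot.mp
          rw [closure_Ico (ne_of_lt hlt)]
          exact ⟨hlt.le, le_rfl⟩
        apply le_of_tendsto hlim
        filter_upwards [self_mem_nhdsWithin] with x hx
        by_contra hcon
        push_neg at hcon
        have : x ∈ S k := ⟨hsub hx, hcon.le⟩
        exact absurd (csInf_le (hS_bdd k) this) (not_le.2 hx.2)
      -- per-step bound: band integral of 1/μ ≤ 2 * γ-integral over hitting-time piece
    have hpiece : ∀ k, cs (k + 1) ≤ μ (cs k) * ∫ s in τ (k + 1)..τ k, γ s := by
      intro k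
      have hord : τ (k + 1) ≤ τ k := hτ_anti k (k + 1) (Nat.le_succ k)
      have hμck_pos : 0 < μ (cs k) := hμ_pos _ ⟨hcs_pos k, (hcs_le_c k).trans hca⟩
      have hRdiff : R (τ k) - R (τ (k + 1)) = ∫ s in τ (k + 1)..τ k, f s := by
        rw [hR_add (τ (k+1)) (τ k) (hτ_Icc (k+1)) (hτ_Icc k)]; ring
      have hbound : (∫ s in τ (k + 1)..τ k, f s) ≤
          ∫ s in τ (k + 1)..τ k, μ (cs k) * γ s := by
        apply intervalIntegral.integral_mono_ae_restrict hord
          (hf_ii _ _ (hτ_Icc (k+1)) (hτ_Icc k))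
          (((hγ_ii _ _ (hτ_Icc (k+1)) (hτ_Icc k))).const_mul _)
        have hsub : Icc (τ (k+1)) (τ k) ⊆ Icc t₀ T :=
          fun x hx => ⟨(hτ_Icc (k+1)).1.trans hx.1, hx.2.trans (hτ_Icc k).2⟩
        filter_upwards [ae_restrict_of_ae_restrict_of_subset hsub hfγR,
          ae_restrict_mem measurableSet_Icc] with s h1 h2
        have hRs : R s ≤ cs k := by
          rw [← hRτ k]
          exact hR_mono s (τ k) (hsub h2) (hτ_Icc k) h2.2
        have : ν (R s) ≤ μ (cs k) := by
          rw [← hν_eq (cs k) ⟨(hcs_pos k).le, (hcs_le_c k).trans hca⟩]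
          exact hν_mono hRs
        calc f s ≤ γ s * ν (R s) := h1
          _ ≤ γ s * μ (cs k) := by
              exact mul_le_mul_of_nonneg_left this (hγ_nonneg s (hsub h2))
          _ = μ (cs k) * γ s := mul_comm _ _
      rw [intervalIntegral.integral_const_mul] at hbound
      have := hRdiff ▸ hbound
      rw [hRτ k, hRτ (k+1), hcs_succ k] at this
      exact this
    have honeμ_ii : ∀ u v, u ∈ Ioc 0 a → v ∈ Ioc 0 a →
        IntervalIntegrable (fun τ => 1 / μ τ) volume u v := by
      intro u v hu hv
      apply ContinuousOn.intervalIntegrable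
      apply ContinuousOn.div continuousOn_const
      · exact hμ_cont.mono (uIcc_subset_Icc ⟨hu.1.le, hu.2⟩ ⟨hv.1.le, hv.2⟩)
      · intro x hx
        rcases Set.mem_uIcc.mp hx with ⟨h1, h2⟩ | ⟨h1, h2⟩
        · exact (hμ_pos x ⟨lt_of_lt_of_le hu.1 h1, h2.trans hv.2⟩).ne'
        · exact (hμ_pos x ⟨lt_of_lt_of_le hv.1 h1, h2.trans hu.2⟩).ne'
    have hcs_Ioc : ∀ k, cs k ∈ Ioc 0 a := fun k => ⟨hcs_pos k, (hcs_le_c k).trans hca⟩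
    have hband : ∀ k, (∫ x in cs (k + 1)..cs k, 1 / μ x) ≤
        2 * ∫ s in τ (k + 2)..τ (k + 1), γ s := by
      intro k
      have hord : cs (k + 1) ≤ cs k := hcs_anti k (k + 1) (Nat.le_succ k)
      have hμ_pos' : 0 < μ (cs (k + 1)) := hμ_pos _ (hcs_Ioc (k + 1))
      have h1 : (∫ x in cs (k + 1)..cs k, 1 / μ x) ≤
          ∫ _x in cs (k + 1)..cs k, 1 / μ (cs (k + 1)) := by
        apply intervalIntegral.integral_mono_on hord
          (honeμ_ii _ _ (hcs_Ioc (k+1)) (hcs_Ioc k)) intervalIntegrable_const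
        intro x hx
        apply one_div_le_one_div_of_le hμ_pos'
        exact hμ_mono ⟨(hcs_pos (k+1)).le, (hcs_le_c (k+1)).trans hca⟩
          ⟨(hcs_pos (k+1)).le.trans hx.1, hx.2.trans ((hcs_le_c k).trans hca)⟩ hx.1
      rw [intervalIntegral.integral_const] at h1
      have h2 : (cs k - cs (k + 1)) • (1 / μ (cs (k + 1))) =
          cs (k + 1) / μ (cs (k + 1)) := by
        rw [hcs_succ k]; rw [smul_eq_mul]; ring
      rw [h2] at h1
      have h3 : cs (k + 1) / μ (cs (k + 1)) ≤ 2 * ∫ s in τ (k + 2)..τ (k + 1), γ s := by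
        rw [div_le_iff₀ hμ_pos']
        have := hpiece (k + 1)
        nlinarith [hcs_succ (k + 1), hpiece (k + 1)]
      linarith
    -- telescoping
    have hγ_piece_nonneg : ∀ k l, k ≤ l → 0 ≤ ∫ s in τ l..τ k, γ s := by
      intro k l hkl
      apply intervalIntegral.integral_nonneg (hτ_anti k l hkl)
      intro x hx
      exact hγ_nonneg x ⟨(hτ_Icc l).1.trans hx.1, hx.2.trans (hτ_Icc k).2⟩
    set G : ℝ := ∫ s in t₀..T, γ s with hG_def
    have hpieceG : ∀ k l, k ≤ l → (∫ s in τ l..τ k, γ s) ≤ G := by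
      intro k l hkl
      have h1 : G = (∫ s in t₀..τ l, γ s) + ((∫ s in τ l..τ k, γ s) +
          ∫ s in τ k..T, γ s) := by
        rw [intervalIntegral.integral_add_adjacent_intervals
          (hγ_ii _ _ (hτ_Icc l) (hτ_Icc k))
          (hγ_ii _ _ (hτ_Icc k) (right_mem_Icc.2 htT.le)),
          intervalIntegral.integral_add_adjacent_intervals
          (hγ_ii _ _ (left_mem_Icc.2 htT.le) (hτ_Icc l))
          (hγ_ii _ _ (hτ_Icc l) (right_mem_Icc.2 htT.le))]
      have h2 : 0 ≤ ∫ s in t₀..τ l, γ s :=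
        intervalIntegral.integral_nonneg (hτ_Icc l).1
          (fun x hx => hγ_nonneg x ⟨hx.1, hx.2.trans (hτ_Icc l).2⟩)
      have h3 : 0 ≤ ∫ s in τ k..T, γ s :=
        intervalIntegral.integral_nonneg (hτ_Icc k).2
          (fun x hx => hγ_nonneg x ⟨(hτ_Icc k).1.trans hx.1, hx.2⟩)
      linarith
    have htel : ∀ N : ℕ, (∫ x in cs N..cs 0, 1 / μ x) ≤
        2 * ∫ s in τ (N + 1)..τ 1, γ s := by
      intro N
      induction N with
      | zero => simp [hγ_piece_nonneg 1 1 le_rfl]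
      | succ N ih =>
        have hsplit : (∫ x in cs (N + 1)..cs 0, 1 / μ x) =
            (∫ x in cs (N + 1)..cs N, 1 / μ x) + ∫ x in cs N..cs 0, 1 / μ x := by
          rw [intervalIntegral.integral_add_adjacent_intervals
            (honeμ_ii _ _ (hcs_Ioc (N+1)) (hcs_Ioc N))
            (honeμ_ii _ _ (hcs_Ioc N) (hcs_Ioc 0))]
        have hsplit2 : (∫ s in τ (N + 2)..τ 1, γ s) =
            (∫ s in τ (N + 2)..τ (N + 1), γ s) + ∫ s in τ (N + 1)..τ 1, γ s := by
          rw [intervalIntegral.integral_add_adjacent_intervals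
            (hγ_ii _ _ (hτ_Icc (N+2)) (hτ_Icc (N+1)))
            (hγ_ii _ _ (hτ_Icc (N+1)) (hτ_Icc 1))]
        have := hband N
        rw [hsplit, hsplit2]
        linarith
    -- conclude contradiction via divergence
    have hfinal : ∀ N : ℕ, (∫ x in cs N..a, 1 / μ x) ≤
        2 * G + ∫ x in (cs 0)..a, 1 / μ x := by
      intro N
      have hsplit : (∫ x in cs N..a, 1 / μ x) =
          (∫ x in cs N..cs 0, 1 / μ x) + ∫ x in (cs 0)..a, 1 / μ x := by
        rw [intervalIntegral.integral_add_adjacent_intervals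
          (honeμ_ii _ _ (hcs_Ioc N) (hcs_Ioc 0))
          (honeμ_ii _ _ (hcs_Ioc 0) (right_mem_Ioc.2 ha))]
      have h1 := (htel N).trans (by
        have := hpieceG 1 (N + 1) (by omega)
        linarith : 2 * (∫ s in τ (N + 1)..τ 1, γ s) ≤ 2 * G)
      linarith [hsplit, h1]
    have hcs_tendsto : Filter.Tendsto cs Filter.atTop (nhdsWithin 0 (Set.Ioi 0)) := by
      rw [tendsto_nhdsWithin_iff]
      constructor
      · have : Filter.Tendsto (fun k : ℕ => c * (1 / 2 : ℝ) ^ k) Filter.atTop (nhds (c * 0)) :=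
          (tendsto_pow_atTop_nhds_zero_of_lt_one (by norm_num) (by norm_num)).const_mul c
        rw [mul_zero] at this
        apply this.congr
        intro k
        simp only [hcs_def, div_pow, one_pow]
        ring
      · exact Filter.Eventually.of_forall fun k => hcs_pos k
    have hev : ∀ᶠ ε in nhdsWithin 0 (Set.Ioi 0),
        2 * G + (∫ x in (cs 0)..a, 1 / μ x) < ∫ τ in ε..a, 1 / μ τ :=
      hdiv.eventually_gt_atTop _
    obtain ⟨N, hN⟩ := (hcs_tendsto.eventually hev).exists
    exact absurd (hfinal N) (not_le.2 hN)
  -- finish : R ≡ 0 on [t₀, T], hence ρ = 0 a.e.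
  filter_upwards [hρR, ae_restrict_mem measurableSet_Icc] with t h1 h2
  have hRt : R t ≤ 0 := by
    rw [← hRT]
    exact hR_mono t T h2 (right_mem_Icc.2 htT.le) h2.2
  have := (hρ_mem t h2).1
  linarith
end

section
/- Let C > 0, ρ₀ > 0 and 0 < T < 1/(4Cρ₀²). Let (ρ_n)_{n∈ℕ} be a sequence of continuous nonnegative functions on [0,T] such that ρ_0(t) ≤ ρ₀ for all t ∈ [0,T], and such that for every n ∈ ℕ and every t ∈ [0,T], ρ_{n+1}(t) ≤ exp(C∫_0^t ρ_n(τ)² dτ) · ( ρ₀ + C ∫_0^t exp(−C∫_0^τ ρ_n(s)² ds) ρ_n(τ)³ dτ ). Then for every n ∈ ℕ and every t ∈ [0,T] one has ρ_n(t) ≤ ρ₀ / √(1 − 4Cρ₀² t). -/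
open MeasureTheory Real

/-- Expansion of the fixed-point expression. -/
lemma iter_expand_aux (c r : ℝ) (P f : ℝ → ℝ) (t : ℝ) :
    Real.exp (c * P t) * (r + c * ∫ τ in (0:ℝ)..t, Real.exp (-(c * P τ)) * f τ)
      = r * Real.exp (c * P t)
        + c * ∫ τ in (0:ℝ)..t, Real.exp (c * P t - c * P τ) * f τ := by
  have h1 : (∫ τ in (0:ℝ)..t, Real.exp (c * P t - c * P τ) * f τ)
      = Real.exp (c * P t) * ∫ τ in (0:ℝ)..t, Real.exp (-(c * P τ)) * f τ := by
    rw [← intervalIntegral.integral_const_mul]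
    apply intervalIntegral.integral_congr
    intro τ _
    simp only [sub_eq_add_neg, Real.exp_add]
    ring
  rw [h1]; ring

theorem iteration_uniform_bound (C ρ₀ T : ℝ) (hC : 0 < C) (hρ₀ : 0 < ρ₀)
    (hT_pos : 0 < T) (hT : T < 1 / (4 * C * ρ₀ ^ 2))
    (ρ : ℕ → ℝ → ℝ)
    (hcont : ∀ n, ContinuousOn (ρ n) (Set.Icc 0 T))
    (hnonneg : ∀ n, ∀ t ∈ Set.Icc 0 T, 0 ≤ ρ n t)
    (h0 : ∀ t ∈ Set.Icc 0 T, ρ 0 t ≤ ρ₀)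
    (hrec : ∀ n, ∀ t ∈ Set.Icc 0 T,
      ρ (n + 1) t ≤ Real.exp (C * ∫ τ in (0:ℝ)..t, (ρ n τ) ^ 2) *
        (ρ₀ + C * ∫ τ in (0:ℝ)..t,
          Real.exp (-(C * ∫ s in (0:ℝ)..τ, (ρ n s) ^ 2)) * (ρ n τ) ^ 3)) :
    ∀ n, ∀ t ∈ Set.Icc 0 T, ρ n t ≤ ρ₀ / Real.sqrt (1 - 4 * C * ρ₀ ^ 2 * t) := by
  set a : ℝ := 4 * C * ρ₀ ^ 2 with ha_def
  have ha : 0 < a := by positivity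
  have haT : a * T < 1 := by
    have := (lt_div_iff₀ ha).mp hT
    linarith
  set M : ℝ → ℝ := fun t => ρ₀ / Real.sqrt (1 - a * t) with hM_def
  suffices H : ∀ n, ∀ t ∈ Set.Icc 0 T, ρ n t ≤ M t by
    intro n t ht; exact H n t ht
  -- basic facts
  have hpos : ∀ t ∈ Set.Icc 0 T, 0 < 1 - a * t := by
    intro t ht
    have h1 : a * t ≤ a * T := by nlinarith [ht.2]
    linarith
  have hMcontAt : ∀ t, 0 < 1 - a * t → ContinuousAt M t := by
    intro t ht
    have hs : Real.sqrt (1 - a * t) ≠ 0 := (Real.sqrt_pos.mpr ht).ne'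
    have hc : Continuous fun t : ℝ => Real.sqrt (1 - a * t) := by fun_prop
    exact continuousAt_const.div hc.continuousAt hs
  have hMcont : ContinuousOn M (Set.Icc 0 T) := fun t ht =>
    (hMcontAt t (hpos t ht)).continuousWithinAt
  have hMpos : ∀ t ∈ Set.Icc 0 T, 0 < M t := fun t ht =>
    div_pos hρ₀ (Real.sqrt_pos.mpr (hpos t ht))
  have hM0 : M 0 = ρ₀ := by simp [hM_def]
  have hMderiv : ∀ t, 0 < 1 - a * t → HasDerivAt M (2 * C * (M t) ^ 3) t := by
    intro t ht
    have hsq : 0 < Real.sqrt (1 - a * t) := Real.sqrt_pos.mpr ht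
    have h1 : HasDerivAt (fun t : ℝ => 1 - a * t) (-a) t := by
      simpa using ((hasDerivAt_id t).const_mul a).const_sub 1
    have h2 : HasDerivAt (fun t => Real.sqrt (1 - a * t))
        (1 / (2 * Real.sqrt (1 - a * t)) * (-a)) t :=
      (Real.hasDerivAt_sqrt ht.ne').comp t h1
    have h3 := (hasDerivAt_const t ρ₀).div h2 hsq.ne'
    have hsqsq : Real.sqrt (1 - a * t) ^ 2 = 1 - a * t := Real.sq_sqrt ht.le
    have hs3 : Real.sqrt (1 - a * t) ^ 3 = (1 - a * t) * Real.sqrt (1 - a * t) := by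
      rw [pow_succ, hsqsq]
    have h4 : (0 * Real.sqrt (1 - a * t) - ρ₀ * (1 / (2 * Real.sqrt (1 - a * t)) * (-a)))
        / Real.sqrt (1 - a * t) ^ 2 = 2 * C * (M t) ^ 3 := by
      simp only [hM_def]
      rw [div_pow]
      field_simp
      rw [ha_def]
      ring
    exact h4 ▸ h3
  -- integrability helper
  have hInt : ∀ f : ℝ → ℝ, ContinuousOn f (Set.Icc 0 T) → ∀ u v : ℝ,
      u ∈ Set.Icc 0 T → v ∈ Set.Icc 0 T → IntervalIntegrable f volume u v := by
    intro f hf u v hu hv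
    exact (hf.mono (Set.uIcc_subset_Icc hu hv)).intervalIntegrable
  have hρcont2 : ∀ n, ContinuousOn (fun s => ρ n s ^ 2) (Set.Icc 0 T) := fun n =>
    (hcont n).pow 2
  have hMcont2 : ContinuousOn (fun s => M s ^ 2) (Set.Icc 0 T) := hMcont.pow 2
  -- differences of primitives
  have hPdiff : ∀ f : ℝ → ℝ, ContinuousOn f (Set.Icc 0 T) → ∀ u v : ℝ,
      u ∈ Set.Icc 0 T → v ∈ Set.Icc 0 T →
      (∫ s in (0:ℝ)..v, f s ^ 2) - (∫ s in (0:ℝ)..u, f s ^ 2) = ∫ s in u..v, f s ^ 2 := by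
    intro f hf u v hu hv
    have h0T : (0:ℝ) ∈ Set.Icc 0 T := ⟨le_rfl, hT_pos.le⟩
    have := intervalIntegral.integral_add_adjacent_intervals
      (hInt _ (hf.pow 2) 0 u h0T hu) (hInt _ (hf.pow 2) u v hu hv)
    simp only [Pi.pow_apply] at this
    linarith
  -- the key FTC identity for M
  have key : ∀ t ∈ Set.Icc 0 T,
      ρ₀ + C * ∫ τ in (0:ℝ)..t, Real.exp (-(C * ∫ s in (0:ℝ)..τ, M s ^ 2)) * M τ ^ 3
        = Real.exp (-(C * ∫ s in (0:ℝ)..t, M s ^ 2)) * M t := by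
    intro t ht
    set B : ℝ → ℝ := fun τ => ∫ s in (0:ℝ)..τ, M s ^ 2 with hB_def
    have hBderiv : ∀ τ ∈ Set.Icc 0 T, HasDerivAt B (M τ ^ 2) τ := by
      intro τ hτ
      have hopen : IsOpen {x : ℝ | 0 < 1 - a * x} := by
        have : Continuous fun x : ℝ => 1 - a * x := by fun_prop
        exact isOpen_lt continuous_const this
      refine intervalIntegral.integral_hasDerivAt_right
        (hInt _ hMcont2 0 τ ⟨le_rfl, hT_pos.le⟩ hτ)
        (ContinuousAt.stronglyMeasurableAtFilter hopen
          (fun x hx => ((hMcontAt x hx).pow 2)) τ (hpos τ hτ)) ?_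
      exact (hMcontAt τ (hpos τ hτ)).pow 2
    have hsub : Set.Icc (0:ℝ) t ⊆ Set.Icc 0 T := Set.Icc_subset_Icc le_rfl ht.2
    have hGderiv : ∀ τ ∈ Set.uIcc (0:ℝ) t,
        HasDerivAt (fun τ => Real.exp (-(C * B τ)) * M τ)
          (Real.exp (-(C * B τ)) * (C * M τ ^ 3)) τ := by
      intro τ hτ'
      have hτ : τ ∈ Set.Icc 0 T := hsub (by rwa [Set.uIcc_of_le ht.1] at hτ')
      have h1 : HasDerivAt (fun τ => -(C * B τ)) (-(C * M τ ^ 2)) τ :=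
        (((hBderiv τ hτ).const_mul C).neg)
      have h2 : HasDerivAt (fun τ => Real.exp (-(C * B τ)))
          (Real.exp (-(C * B τ)) * (-(C * M τ ^ 2))) τ := h1.exp
      have h3 := h2.mul (hMderiv τ (hpos τ hτ))
      exact h3.congr_deriv (by ring)
    have hderint : IntervalIntegrable
        (fun τ => Real.exp (-(C * B τ)) * (C * M τ ^ 3)) volume 0 t := by
      apply hInt _ ?_ 0 t ⟨le_rfl, hT_pos.le⟩ ht
      have hBc : ContinuousOn B (Set.Icc 0 T) := fun τ hτ =>
        (hBderiv τ hτ).continuousAt.continuousWithinAt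
      exact ((Real.continuous_exp.comp_continuousOn
        ((continuousOn_const.mul hBc).neg)).mul
        (continuousOn_const.mul (hMcont.pow 3)))
    have hftc := intervalIntegral.integral_eq_sub_of_hasDerivAt hGderiv hderint
    have hint2 : (∫ τ in (0:ℝ)..t, Real.exp (-(C * B τ)) * (C * M τ ^ 3))
        = C * ∫ τ in (0:ℝ)..t, Real.exp (-(C * B τ)) * M τ ^ 3 := by
      rw [← intervalIntegral.integral_const_mul]
      apply intervalIntegral.integral_congr
      intro τ _; ring
    rw [hint2] at hftc
    have hB0 : B 0 = 0 := intervalIntegral.integral_same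
    rw [hB0, hM0] at hftc
    simp only [mul_zero, neg_zero, Real.exp_zero, one_mul] at hftc
    linarith
  -- base bound ρ₀ ≤ M t
  have hbase : ∀ t ∈ Set.Icc 0 T, ρ₀ ≤ M t := by
    intro t ht
    have h1 : Real.sqrt (1 - a * t) ≤ 1 := Real.sqrt_le_one.mpr (by nlinarith [ht.1])
    have h2 : 0 < Real.sqrt (1 - a * t) := Real.sqrt_pos.mpr (hpos t ht)
    show ρ₀ ≤ ρ₀ / Real.sqrt (1 - a * t)
    rw [le_div_iff₀ h2]
    nlinarith
  intro n
  induction n with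
  | zero => intro t ht; exact (h0 t ht).trans (hbase t ht)
  | succ n ih =>
    intro t ht
    have h0t : (0:ℝ) ≤ t := ht.1
    have h0T : (0:ℝ) ∈ Set.Icc 0 T := ⟨le_rfl, hT_pos.le⟩
    have hsub : Set.Icc (0:ℝ) t ⊆ Set.Icc 0 T := Set.Icc_subset_Icc le_rfl ht.2
    set Pρ : ℝ → ℝ := fun τ => ∫ s in (0:ℝ)..τ, ρ n s ^ 2 with hPρ_def
    set PM : ℝ → ℝ := fun τ => ∫ s in (0:ℝ)..τ, M s ^ 2 with hPM_def
    -- pointwise comparison of the exponents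
    have hPle : ∀ τ ∈ Set.Icc 0 t, Pρ t - Pρ τ ≤ PM t - PM τ := by
      intro τ hτ
      have hτT : τ ∈ Set.Icc 0 T := hsub hτ
      rw [hPρ_def, hPM_def]
      rw [hPdiff _ (hcont n) τ t hτT ht, hPdiff _ hMcont τ t hτT ht]
      apply intervalIntegral.integral_mono_on hτ.2
        (hInt _ (hρcont2 n) τ t hτT ht) (hInt _ hMcont2 τ t hτT ht)
      intro s hs
      have hsT : s ∈ Set.Icc 0 T := (Set.Icc_subset_Icc hτT.1 ht.2) hs
      exact pow_le_pow_left₀ (hnonneg n s hsT) (ih s hsT) 2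
    -- continuity of primitives on [0, t]
    have hprim : ∀ f : ℝ → ℝ, ContinuousOn f (Set.Icc 0 T) →
        ContinuousOn (fun τ => ∫ s in (0:ℝ)..τ, f s ^ 2) (Set.Icc 0 t) := by
      intro f hf
      have := intervalIntegral.continuousOn_primitive_interval'
        (hInt _ (hf.pow 2) 0 t h0T ht) (Set.left_mem_uIcc)
      rwa [Set.uIcc_of_le h0t] at this
    have hg1int : IntervalIntegrable
        (fun τ => Real.exp (C * Pρ t - C * Pρ τ) * ρ n τ ^ 3) volume 0 t := by
      apply ContinuousOn.intervalIntegrable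
      rw [Set.uIcc_of_le h0t]
      exact (Real.continuous_exp.comp_continuousOn
        (continuousOn_const.sub (continuousOn_const.mul (hprim _ (hcont n))))).mul
        (((hcont n).mono hsub).pow 3)
    have hg2int : IntervalIntegrable
        (fun τ => Real.exp (C * PM t - C * PM τ) * M τ ^ 3) volume 0 t := by
      apply ContinuousOn.intervalIntegrable
      rw [Set.uIcc_of_le h0t]
      exact (Real.continuous_exp.comp_continuousOn
        (continuousOn_const.sub (continuousOn_const.mul (hprim _ hMcont)))).mul
        ((hMcont.mono hsub).pow 3)
    have hintmono : (∫ τ in (0:ℝ)..t, Real.exp (C * Pρ t - C * Pρ τ) * ρ n τ ^ 3)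
        ≤ ∫ τ in (0:ℝ)..t, Real.exp (C * PM t - C * PM τ) * M τ ^ 3 := by
      apply intervalIntegral.integral_mono_on h0t hg1int hg2int
      intro τ hτ
      have hτT : τ ∈ Set.Icc 0 T := hsub hτ
      have hexp : Real.exp (C * Pρ t - C * Pρ τ) ≤ Real.exp (C * PM t - C * PM τ) := by
        apply Real.exp_le_exp.mpr
        have := hPle τ hτ
        nlinarith
      apply mul_le_mul hexp
        (pow_le_pow_left₀ (hnonneg n τ hτT) (ih τ hτT) 3)
        (pow_nonneg (hnonneg n τ hτT) 3) (Real.exp_nonneg _)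
    have hP0le : Pρ t ≤ PM t := by
      have := hPle 0 ⟨le_rfl, h0t⟩
      simp only [hPρ_def, hPM_def, intervalIntegral.integral_same] at this ⊢
      linarith
    calc ρ (n + 1) t
        ≤ Real.exp (C * Pρ t) *
            (ρ₀ + C * ∫ τ in (0:ℝ)..t, Real.exp (-(C * Pρ τ)) * ρ n τ ^ 3) := hrec n t ht
      _ = ρ₀ * Real.exp (C * Pρ t)
          + C * ∫ τ in (0:ℝ)..t, Real.exp (C * Pρ t - C * Pρ τ) * ρ n τ ^ 3 :=
          iter_expand_aux C ρ₀ Pρ (fun τ => ρ n τ ^ 3) t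
      _ ≤ ρ₀ * Real.exp (C * PM t)
          + C * ∫ τ in (0:ℝ)..t, Real.exp (C * PM t - C * PM τ) * M τ ^ 3 := by
          have h1 : Real.exp (C * Pρ t) ≤ Real.exp (C * PM t) :=
            Real.exp_le_exp.mpr (by nlinarith)
          have h2 := mul_le_mul_of_nonneg_left h1 hρ₀.le
          have h3 := mul_le_mul_of_nonneg_left hintmono hC.le
          linarith
      _ = Real.exp (C * PM t) *
            (ρ₀ + C * ∫ τ in (0:ℝ)..t, Real.exp (-(C * PM τ)) * M τ ^ 3) :=
          (iter_expand_aux C ρ₀ PM (fun τ => M τ ^ 3) t).symm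
      _ = Real.exp (C * PM t) * (Real.exp (-(C * PM t)) * M t) := by rw [key t ht]
      _ = M t := by
          rw [← mul_assoc, ← Real.exp_add, add_neg_cancel, Real.exp_zero, one_mul]
end

section
/- Let m : ℝ → ℝ be continuous, Lebesgue integrable and nonnegative, and define u(x) = (1/2) ∫_ℝ e^{−|x−y|} m(y) dy. Then u is differentiable with u'(x) = (1/2) e^x ∫_x^∞ e^{−y} m(y) dy − (1/2) e^{−x} ∫_{−∞}^x e^{y} m(y) dy, and for every x ∈ ℝ one has u(x) + u'(x) ≥ 0 and u(x) − u'(x) ≥ 0. Moreover, if ∫_ℝ m(y) dy > 0, then u(x) > 0 for every x ∈ ℝ. -/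
set_option maxHeartbeats 1000000


open MeasureTheory Real Set

lemma ginv_integral_Ioi_sub_Ioi {g : ℝ → ℝ} (hg : ∀ a : ℝ, IntegrableOn g (Set.Ioi a))
    (a b : ℝ) : (∫ x in Set.Ioi a, g x) - ∫ x in Set.Ioi b, g x = ∫ x in a..b, g x := by
  wlog hab : a ≤ b generalizing a b
  · rw [intervalIntegral.integral_symm, ← this b a (le_of_not_ge hab), neg_sub]
  rw [intervalIntegral.integral_of_le hab, sub_eq_iff_eq_add,
    ← setIntegral_union Set.Ioc_disjoint_Ioi_same measurableSet_Ioi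
      ((hg a).mono_set Set.Ioc_subset_Ioi_self) (hg b),
    Set.Ioc_union_Ioi_eq_Ioi hab]

theorem green_convolution_positivity (m : ℝ → ℝ)
    (hm_cont : Continuous m)
    (hm_int : MeasureTheory.Integrable m)
    (hm_nonneg : ∀ y, 0 ≤ m y)
    (u : ℝ → ℝ)
    (hu : ∀ x, u x = (1 / 2) * ∫ y, Real.exp (-|x - y|) * m y) :
    (∀ x, HasDerivAt u
      ((1 / 2) * Real.exp x * (∫ y in Set.Ioi x, Real.exp (-y) * m y)
        - (1 / 2) * Real.exp (-x) * (∫ y in Set.Iio x, Real.exp y * m y)) x) ∧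
    (∀ x, 0 ≤ u x + deriv u x) ∧
    (∀ x, 0 ≤ u x - deriv u x) ∧
    ((0 < ∫ y, m y) → ∀ x, 0 < u x) := by
  set f : ℝ → ℝ := fun y => Real.exp y * m y with hf
  set g : ℝ → ℝ := fun y => Real.exp (-y) * m y with hg
  have hf_cont : Continuous f := (Real.continuous_exp).mul hm_cont
  have hg_cont : Continuous g := (Real.continuous_exp.comp continuous_neg).mul hm_cont
  -- integrability
  have hf_int : ∀ x : ℝ, IntegrableOn f (Set.Iio x) := by
    intro x
    refine Integrable.mono ((hm_int.const_mul (Real.exp x)).restrict)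
      (hf_cont.aestronglyMeasurable.restrict) ?_
    filter_upwards [ae_restrict_mem measurableSet_Iio] with y hy
    simp only [hf, Real.norm_eq_abs, abs_mul, abs_of_nonneg (hm_nonneg y),
      abs_of_pos (Real.exp_pos y), abs_of_pos (Real.exp_pos x)]
    exact mul_le_mul_of_nonneg_right (Real.exp_le_exp.2 (le_of_lt hy)) (hm_nonneg y)
  have hg_int : ∀ x : ℝ, IntegrableOn g (Set.Ioi x) := by
    intro x
    refine Integrable.mono ((hm_int.const_mul (Real.exp (-x))).restrict)
      (hg_cont.aestronglyMeasurable.restrict) ?_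
    filter_upwards [ae_restrict_mem measurableSet_Ioi] with y hy
    simp only [hg, Real.norm_eq_abs, abs_mul, abs_of_nonneg (hm_nonneg y),
      abs_of_pos (Real.exp_pos _), abs_of_pos (Real.exp_pos _)]
    exact mul_le_mul_of_nonneg_right (Real.exp_le_exp.2 (by linarith [(Set.mem_Ioi.1 hy).le])) (hm_nonneg y)
  set A : ℝ → ℝ := fun x => ∫ y in Set.Iio x, f y with hA
  set B : ℝ → ℝ := fun x => ∫ y in Set.Ioi x, g y with hB
  -- u x = (1/2) * (exp (-x) * A x + exp x * B x)
  have hu2 : ∀ x, u x = (1 / 2) * (Real.exp (-x) * A x + Real.exp x * B x) := by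
    intro x
    have hker_int : Integrable (fun y => Real.exp (-|x - y|) * m y) := by
      refine Integrable.mono hm_int
        (((Real.continuous_exp.comp ((continuous_const.sub continuous_id).abs.neg)).mul
          hm_cont).aestronglyMeasurable) ?_
      filter_upwards with y
      simp only [Real.norm_eq_abs, abs_mul, abs_of_nonneg (hm_nonneg y),
        abs_of_pos (Real.exp_pos _)]
      nth_rewrite 2 [← one_mul (m y)]
      exact mul_le_mul_of_nonneg_right
        (Real.exp_le_one_iff.2 (neg_nonpos.2 (abs_nonneg _))) (hm_nonneg y)
    rw [hu x, ← intervalIntegral.integral_Iio_add_Ici (b := x) hker_int.integrableOn hker_int.integrableOn]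
    have h1 : ∫ y in Set.Iio x, Real.exp (-|x - y|) * m y = Real.exp (-x) * A x := by
      rw [hA, ← integral_const_mul]
      refine setIntegral_congr_fun measurableSet_Iio fun y hy => ?_
      have : |x - y| = x - y := abs_of_nonneg (by simp only [Set.mem_Iio] at hy; linarith)
      rw [this, ← mul_assoc, ← Real.exp_add]
      ring_nf
    have h2 : ∫ y in Set.Ici x, Real.exp (-|x - y|) * m y = Real.exp x * B x := by
      rw [hB, ← integral_const_mul, integral_Ici_eq_integral_Ioi]
      refine setIntegral_congr_fun measurableSet_Ioi fun y hy => ?_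
      have : |x - y| = y - x := by
        rw [abs_sub_comm]; exact abs_of_nonneg (by simp only [Set.mem_Ioi] at hy; linarith)
      rw [this, ← mul_assoc, ← Real.exp_add]
      ring_nf
    rw [h1, h2]
  -- derivatives of A and B
  have hA_deriv : ∀ x, HasDerivAt A (f x) x := by
    intro x
    have hf_int_Iic : ∀ z : ℝ, IntegrableOn f (Set.Iic z) := fun z =>
      (hf_int (z + 1)).mono_set fun y hy => Set.mem_Iio.2 (lt_of_le_of_lt (Set.mem_Iic.1 hy) (lt_add_one z))
    have hrepr : ∀ z : ℝ, A z = A 0 + ∫ y in (0:ℝ)..z, f y := by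
      intro z
      show (∫ y in Set.Iio z, f y) = (∫ y in Set.Iio (0:ℝ), f y) + ∫ y in (0:ℝ)..z, f y
      rw [← integral_Iic_eq_integral_Iio, ← integral_Iic_eq_integral_Iio,
        ← intervalIntegral.integral_Iic_sub_Iic (hf_int_Iic 0) (hf_int_Iic z)]
      ring
    have : HasDerivAt (fun z => A 0 + ∫ y in (0:ℝ)..z, f y) (f x) x := by
      refine HasDerivAt.const_add _ ?_
      exact intervalIntegral.integral_hasDerivAt_right
        (hf_cont.intervalIntegrable 0 x)
        hf_cont.aestronglyMeasurable.stronglyMeasurableAtFilter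
        hf_cont.continuousAt
    exact this.congr_of_eventuallyEq (Filter.Eventually.of_forall hrepr)
  have hB_deriv : ∀ x, HasDerivAt B (-(g x)) x := by
    intro x
    have hrepr : ∀ z : ℝ, B z = B 0 - ∫ y in (0:ℝ)..z, f 0 + (g y - f 0) := by
      intro z
      have := ginv_integral_Ioi_sub_Ioi hg_int 0 z
      simp only [hB]
      have h2 : ∫ y in (0:ℝ)..z, f 0 + (g y - f 0) = ∫ y in (0:ℝ)..z, g y :=
        intervalIntegral.integral_congr fun y _ => by ring
      rw [h2]
      linarith [this]
    have : HasDerivAt (fun z => B 0 - ∫ y in (0:ℝ)..z, f 0 + (g y - f 0)) (-(g x)) x := by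
      have hd : HasDerivAt (fun z => ∫ y in (0:ℝ)..z, f 0 + (g y - f 0)) (g x) x := by
        have : HasDerivAt (fun z => ∫ y in (0:ℝ)..z, g y) (g x) x :=
          intervalIntegral.integral_hasDerivAt_right
            (hg_cont.intervalIntegrable 0 x)
            hg_cont.aestronglyMeasurable.stronglyMeasurableAtFilter
            hg_cont.continuousAt
        refine this.congr_of_eventuallyEq (Filter.Eventually.of_forall fun z => ?_)
        exact intervalIntegral.integral_congr fun y _ => by ring
      exact ((hasDerivAt_const x (B 0)).sub hd).congr_deriv (by ring)
    exact this.congr_of_eventuallyEq (Filter.Eventually.of_forall hrepr)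
  -- derivative of u
  have hu_deriv : ∀ x, HasDerivAt u
      ((1 / 2) * Real.exp x * B x - (1 / 2) * Real.exp (-x) * A x) x := by
    intro x
    have h1 : HasDerivAt (fun z => (1 / 2) * (Real.exp (-z) * A z + Real.exp z * B z))
        ((1 / 2) * Real.exp x * B x - (1 / 2) * Real.exp (-x) * A x) x := by
      have hea : HasDerivAt (fun z => Real.exp (-z) * A z)
          (-Real.exp (-x) * A x + Real.exp (-x) * f x) x := by
        have h1 : HasDerivAt (fun z : ℝ => Real.exp (-z)) (-Real.exp (-x)) x := by
          simpa using ((hasDerivAt_id x).neg.exp)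
        exact h1.mul (hA_deriv x)
      have heb : HasDerivAt (fun z => Real.exp z * B z)
          (Real.exp x * B x + Real.exp x * (-(g x))) x :=
        (Real.hasDerivAt_exp x).mul (hB_deriv x)
      have := (hea.add heb).const_mul (1 / 2 : ℝ)
      refine this.congr_deriv ?_
      simp only [hf, hg]
      ring
    exact h1.congr_of_eventuallyEq (Filter.Eventually.of_forall hu2)
  have hA_nonneg : ∀ x, 0 ≤ A x := fun x =>
    setIntegral_nonneg measurableSet_Iio fun y _ =>
      mul_nonneg (Real.exp_pos y).le (hm_nonneg y)
  have hB_nonneg : ∀ x, 0 ≤ B x := fun x =>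
    setIntegral_nonneg measurableSet_Ioi fun y _ =>
      mul_nonneg (Real.exp_pos _).le (hm_nonneg y)
  have hderiv_eq : ∀ x, deriv u x
      = (1 / 2) * Real.exp x * B x - (1 / 2) * Real.exp (-x) * A x := fun x =>
    (hu_deriv x).deriv
  refine ⟨hu_deriv, ?_, ?_, ?_⟩
  · intro x
    rw [hderiv_eq x, hu2 x]
    have := hB_nonneg x
    nlinarith [Real.exp_pos x, hA_nonneg x]
  · intro x
    rw [hderiv_eq x, hu2 x]
    nlinarith [Real.exp_pos (-x), hA_nonneg x, hB_nonneg x]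
  · intro hpos x
    have hy0 : ∃ y0, 0 < m y0 := by
      by_contra h
      push_neg at h
      have : ∀ y, m y = 0 := fun y => le_antisymm (h y) (hm_nonneg y)
      simp only [funext this, integral_zero] at hpos
      exact lt_irrefl 0 hpos
    obtain ⟨y0, hy0⟩ := hy0
    rw [hu x]
    have hker_cont : Continuous (fun y => Real.exp (-|x - y|) * m y) :=
      (Real.continuous_exp.comp ((continuous_const.sub continuous_id).abs.neg)).mul hm_cont
    have hker_int : Integrable (fun y => Real.exp (-|x - y|) * m y) := by
      refine Integrable.mono hm_int hker_cont.aestronglyMeasurable ?_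
      filter_upwards with y
      simp only [Real.norm_eq_abs, abs_mul, abs_of_nonneg (hm_nonneg y),
        abs_of_pos (Real.exp_pos _)]
      nth_rewrite 2 [← one_mul (m y)]
      exact mul_le_mul_of_nonneg_right (Real.exp_le_one_iff.2 (neg_nonpos.2 (abs_nonneg _))) (hm_nonneg y)
    have : 0 < ∫ y, Real.exp (-|x - y|) * m y := by
      rw [integral_pos_iff_support_of_nonneg
        (fun y => mul_nonneg (Real.exp_pos _).le (hm_nonneg y)) hker_int]
      have hopen : IsOpen {y : ℝ | 0 < Real.exp (-|x - y|) * m y} :=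
        isOpen_lt continuous_const hker_cont
      have hmem : y0 ∈ {y : ℝ | 0 < Real.exp (-|x - y|) * m y} :=
        mul_pos (Real.exp_pos _) hy0
      refine lt_of_lt_of_le (hopen.measure_pos volume ⟨y0, hmem⟩)
        (measure_mono fun y hy => ne_of_gt hy)
    linarith
end

section
/- (Periodic peakon identity J₁.) Let φ : ℝ → ℝ be smooth and 1-periodic, let s ∈ [0,1], and let a, b be real numbers. With ξ(x) = x − s + 1/2 and ζ(x) = x − s − 1/2, one has ∫_0^s ( a cosh ξ(x) − b sinh ξ(x) ) ( φ(x) − φ''(x) ) dx + ∫_s^1 ( a cosh ζ(x) − b sinh ζ(x) ) ( φ(x) − φ''(x) ) dx = 2 a sinh(1/2) φ(s) + 2 b sinh(1/2) φ'(s). -/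
open MeasureTheory Real ContDiff

private lemma peakon_key (φ : ℝ → ℝ) (hφ : ContDiff ℝ ∞ φ) (s d a b l u : ℝ) :
    (∫ x in l..u, (a * Real.cosh (x - s + d) - b * Real.sinh (x - s + d)) *
        (φ x - deriv (deriv φ) x)) =
    ((a * Real.sinh (u - s + d) - b * Real.cosh (u - s + d)) * φ u -
      (a * Real.cosh (u - s + d) - b * Real.sinh (u - s + d)) * deriv φ u) -
    ((a * Real.sinh (l - s + d) - b * Real.cosh (l - s + d)) * φ l -
      (a * Real.cosh (l - s + d) - b * Real.sinh (l - s + d)) * deriv φ l) := by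
  have hφ1 : ContDiff ℝ ∞ (deriv φ) := (contDiff_infty_iff_deriv.mp hφ).2
  have hφ2 : Continuous (deriv (deriv φ)) := (contDiff_infty_iff_deriv.mp hφ1).2.continuous
  apply intervalIntegral.integral_eq_sub_of_hasDerivAt
  · intro x _
    have hx : HasDerivAt (fun x : ℝ => x - s + d) 1 x := by
      simpa using ((hasDerivAt_id x).sub_const s).add_const d
    have hc : HasDerivAt (fun x : ℝ => Real.cosh (x - s + d)) (Real.sinh (x - s + d)) x := by
      simpa using hx.cosh
    have hsn : HasDerivAt (fun x : ℝ => Real.sinh (x - s + d)) (Real.cosh (x - s + d)) x := by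
      simpa using hx.sinh
    have hdφ : HasDerivAt φ (deriv φ x) x := (hφ.differentiable (by norm_num) x).hasDerivAt
    have hdφ' : HasDerivAt (deriv φ) (deriv (deriv φ) x) x :=
      (hφ1.differentiable (by norm_num) x).hasDerivAt
    have H := (((hsn.const_mul a).sub (hc.const_mul b)).mul hdφ).sub
      (((hc.const_mul a).sub (hsn.const_mul b)).mul hdφ')
    convert H using 1
    · ext y; rfl
    · simp only [Pi.sub_apply]; ring
  · apply Continuous.intervalIntegrable
    have h1 : Continuous (fun x : ℝ => x - s + d) := by continuity
    exact ((continuous_const.mul (Real.continuous_cosh.comp h1)).sub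
      (continuous_const.mul (Real.continuous_sinh.comp h1))).mul (hφ.continuous.sub hφ2)

theorem periodic_peakon_identity_J1 (φ : ℝ → ℝ)
    (hφ : ContDiff ℝ (⊤ : ℕ∞) φ) (hper : Function.Periodic φ 1)
    (s : ℝ) (hs : s ∈ Set.Icc (0:ℝ) 1) (a b : ℝ) :
    (∫ x in (0:ℝ)..s, (a * Real.cosh (x - s + 1 / 2) - b * Real.sinh (x - s + 1 / 2)) *
        (φ x - deriv (deriv φ) x)) +
      (∫ x in s..(1:ℝ), (a * Real.cosh (x - s - 1 / 2) - b * Real.sinh (x - s - 1 / 2)) *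
        (φ x - deriv (deriv φ) x)) =
    2 * a * Real.sinh (1 / 2) * φ s + 2 * b * Real.sinh (1 / 2) * deriv φ s := by
  have hrw : ∀ x : ℝ, x - s - 1 / 2 = x - s + (-(1/2)) := fun x => by ring
  simp_rw [hrw]
  rw [peakon_key φ (hφ.of_le (by simp)) s (1/2) a b 0 s, peakon_key φ (hφ.of_le (by simp)) s (-(1/2)) a b s 1]
  have e1 : s - s + (1/2 : ℝ) = 1/2 := by ring
  have e2 : (0 : ℝ) - s + 1/2 = 1/2 - s := by ring
  have e3 : (1 : ℝ) - s + (-(1/2)) = 1/2 - s := by ring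
  have e4 : s - s + (-(1/2) : ℝ) = -(1/2) := by ring
  have p0 : φ 1 = φ 0 := by simpa using hper 0
  have p1 : deriv φ 1 = deriv φ 0 := by
    have hfe : (fun y : ℝ => φ (y + 1)) = φ := funext hper
    calc deriv φ 1 = deriv (fun y : ℝ => φ (y + 1)) 0 := by
          rw [deriv_comp_add_const]; norm_num
      _ = deriv φ 0 := by rw [hfe]
  rw [e1, e2, e3, e4, p0, p1, Real.sinh_neg, Real.cosh_neg]
  ring
end

section
/- (Periodic peakon identity J₂.) Let φ : ℝ → ℝ be smooth and 1-periodic and let s ∈ [0,1]. With ξ(x) = x − s + 1/2 and ζ(x) = x − s − 1/2, one has ∫_0^s ( −4 cosh²ξ sinh ξ · φ − (1/2) sinh³ξ · φ + (3/2) cosh ξ sinh²ξ · φ' + cosh²ξ sinh ξ · φ'' )(x) dx + ∫_s^1 ( −4 cosh²ζ sinh ζ · φ − (1/2) sinh³ζ · φ + (3/2) cosh ζ sinh²ζ · φ' + cosh²ζ sinh ζ · φ'' )(x) dx = 2 cosh²(1/2) sinh(1/2) φ'(s). -/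
open MeasureTheory Real

private lemma peakon_hasDerivAt (s c : ℝ) (φ : ℝ → ℝ)
    (h1 : Differentiable ℝ φ) (h2 : Differentiable ℝ (deriv φ)) (x : ℝ) :
    HasDerivAt (fun x =>
        (-(1/2) * Real.cosh (x - s + c) * Real.sinh (x - s + c) ^ 2
          - Real.cosh (x - s + c) ^ 3) * φ x
        + Real.cosh (x - s + c) ^ 2 * Real.sinh (x - s + c) * deriv φ x)
      (-4 * (Real.cosh (x - s + c)) ^ 2 * Real.sinh (x - s + c) * φ x
        - (1 / 2) * (Real.sinh (x - s + c)) ^ 3 * φ x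
        + (3 / 2) * Real.cosh (x - s + c) * (Real.sinh (x - s + c)) ^ 2 * deriv φ x
        + (Real.cosh (x - s + c)) ^ 2 * Real.sinh (x - s + c) * deriv (deriv φ) x) x := by
  have ht : HasDerivAt (fun x : ℝ => x - s + c) 1 x := by
    simpa using ((hasDerivAt_id x).sub_const s).add_const c
  have hc : HasDerivAt (fun x => Real.cosh (x - s + c)) (Real.sinh (x - s + c) * 1) x := ht.cosh
  have hsh : HasDerivAt (fun x => Real.sinh (x - s + c)) (Real.cosh (x - s + c) * 1) x := ht.sinh
  have hφ1 : HasDerivAt φ (deriv φ x) x := (h1 x).hasDerivAt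
  have hφ2 : HasDerivAt (deriv φ) (deriv (deriv φ) x) x := (h2 x).hasDerivAt
  have H := ((((hc.mul (hsh.pow 2)).const_mul (-(1/2):ℝ)).sub (hc.pow 3)).mul hφ1).add
    (((hc.pow 2).mul hsh).mul hφ2)
  convert H using 1
  · rfl
  · rfl
  · funext y; simp only [Pi.add_apply, Pi.sub_apply, Pi.mul_apply, Pi.pow_apply]; ring
  · simp only [Pi.add_apply, Pi.sub_apply, Pi.mul_apply, Pi.pow_apply]; push_cast; ring

theorem periodic_peakon_identity_J2 (φ : ℝ → ℝ)
    (hφ : ContDiff ℝ (⊤ : ℕ∞) φ) (hper : Function.Periodic φ 1)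
    (s : ℝ) (hs : s ∈ Set.Icc (0:ℝ) 1) :
    (∫ x in (0:ℝ)..s,
        (-4 * (Real.cosh (x - s + 1 / 2)) ^ 2 * Real.sinh (x - s + 1 / 2) * φ x
          - (1 / 2) * (Real.sinh (x - s + 1 / 2)) ^ 3 * φ x
          + (3 / 2) * Real.cosh (x - s + 1 / 2) * (Real.sinh (x - s + 1 / 2)) ^ 2 * deriv φ x
          + (Real.cosh (x - s + 1 / 2)) ^ 2 * Real.sinh (x - s + 1 / 2) * deriv (deriv φ) x)) +
      (∫ x in s..(1:ℝ),
        (-4 * (Real.cosh (x - s - 1 / 2)) ^ 2 * Real.sinh (x - s - 1 / 2) * φ x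
          - (1 / 2) * (Real.sinh (x - s - 1 / 2)) ^ 3 * φ x
          + (3 / 2) * Real.cosh (x - s - 1 / 2) * (Real.sinh (x - s - 1 / 2)) ^ 2 * deriv φ x
          + (Real.cosh (x - s - 1 / 2)) ^ 2 * Real.sinh (x - s - 1 / 2) * deriv (deriv φ) x)) =
    2 * (Real.cosh (1 / 2)) ^ 2 * Real.sinh (1 / 2) * deriv φ s := by
  have hphiI : ContDiff ℝ ((⊤ : ℕ∞) : WithTop ℕ∞) φ := hφ.of_le (by simp)
  have hd1 : Differentiable ℝ φ := hphiI.differentiable (by norm_num)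
  have hφ' : ContDiff ℝ ((⊤ : ℕ∞) : WithTop ℕ∞) (deriv φ) := (contDiff_infty_iff_deriv.mp hphiI).2
  have hd2 : Differentiable ℝ (deriv φ) := hφ'.differentiable (by norm_num)
  have hc2 : Continuous (deriv (deriv φ)) :=
    ((contDiff_infty_iff_deriv.mp hφ').2).continuous
  have hcont : ∀ c : ℝ, Continuous (fun x =>
      -4 * (Real.cosh (x - s + c)) ^ 2 * Real.sinh (x - s + c) * φ x
        - (1 / 2) * (Real.sinh (x - s + c)) ^ 3 * φ x
        + (3 / 2) * Real.cosh (x - s + c) * (Real.sinh (x - s + c)) ^ 2 * deriv φ x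
        + (Real.cosh (x - s + c)) ^ 2 * Real.sinh (x - s + c) * deriv (deriv φ) x) := by
    intro c
    have hlin : Continuous (fun x : ℝ => x - s + c) := by continuity
    have hch := Real.continuous_cosh.comp hlin
    have hsh := Real.continuous_sinh.comp hlin
    exact ((((continuous_const.mul (hch.pow 2)).mul hsh).mul hd1.continuous).sub
        ((continuous_const.mul (hsh.pow 3)).mul hd1.continuous)).add
        (((continuous_const.mul hch).mul (hsh.pow 2)).mul hd2.continuous) |>.add
        (((hch.pow 2).mul hsh).mul hc2)
  set G : ℝ → ℝ → ℝ := fun c x =>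
    (-(1/2) * Real.cosh (x - s + c) * Real.sinh (x - s + c) ^ 2
      - Real.cosh (x - s + c) ^ 3) * φ x
    + Real.cosh (x - s + c) ^ 2 * Real.sinh (x - s + c) * deriv φ x with hG
  have hI1 : (∫ x in (0:ℝ)..s,
        (-4 * (Real.cosh (x - s + 1 / 2)) ^ 2 * Real.sinh (x - s + 1 / 2) * φ x
          - (1 / 2) * (Real.sinh (x - s + 1 / 2)) ^ 3 * φ x
          + (3 / 2) * Real.cosh (x - s + 1 / 2) * (Real.sinh (x - s + 1 / 2)) ^ 2 * deriv φ x
          + (Real.cosh (x - s + 1 / 2)) ^ 2 * Real.sinh (x - s + 1 / 2) * deriv (deriv φ) x))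
      = G (1/2) s - G (1/2) 0 :=
    intervalIntegral.integral_eq_sub_of_hasDerivAt
      (fun x _ => peakon_hasDerivAt s (1/2) φ hd1 hd2 x)
      ((hcont (1/2)).intervalIntegrable _ _)
  have hI2 : (∫ x in s..(1:ℝ),
        (-4 * (Real.cosh (x - s - 1 / 2)) ^ 2 * Real.sinh (x - s - 1 / 2) * φ x
          - (1 / 2) * (Real.sinh (x - s - 1 / 2)) ^ 3 * φ x
          + (3 / 2) * Real.cosh (x - s - 1 / 2) * (Real.sinh (x - s - 1 / 2)) ^ 2 * deriv φ x
          + (Real.cosh (x - s - 1 / 2)) ^ 2 * Real.sinh (x - s - 1 / 2) * deriv (deriv φ) x))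
      = G (-(1/2)) 1 - G (-(1/2)) s := by
    have : ∀ x : ℝ, x - s - 1/2 = x - s + (-(1/2)) := fun x => by ring
    simp only [this]
    exact intervalIntegral.integral_eq_sub_of_hasDerivAt
      (fun x _ => peakon_hasDerivAt s (-(1/2)) φ hd1 hd2 x)
      ((hcont (-(1/2))).intervalIntegrable _ _)
  rw [hI1, hI2]
  have hp0 : φ 1 = φ 0 := by simpa using hper 0
  have hp1 : deriv φ 1 = deriv φ 0 := by
    have h : (fun y : ℝ => φ (y + 1)) = φ := funext hper
    calc deriv φ 1 = deriv (fun y : ℝ => φ (y + 1)) 0 := by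
          rw [deriv_comp_add_const]; norm_num
      _ = deriv φ 0 := by rw [h]
  simp only [hG]
  have e1 : s - s + (1/2 : ℝ) = 1/2 := by ring
  have e2 : (0:ℝ) - s + 1/2 = -(s - 1/2) := by ring
  have e3 : (1:ℝ) - s + (-(1/2)) = -(s - 1/2) := by ring
  have e4 : s - s + (-(1/2):ℝ) = -(1/2) := by ring
  rw [e1, e2, e3, e4, Real.cosh_neg, Real.sinh_neg, Real.cosh_neg, Real.sinh_neg,
    hp0, hp1]
  ring
end
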